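/- arXiv:0712.0127 — 2 statements merged into one kernel-verified Lean document; each statement's English description precedes it below -/
import Mathlib

section
/- Let R be a local G-semisimple commutative ring. Then every R-module M is isomorphic to R^(I) ⊕ N for some index set I (where R^(I) denotes the free R-module on I) and some R-module N such that every element x of N has nonzero annihilator, i.e., for every x ∈ N there exists r ∈ R with r ≠ 0 and r • x = 0. -/
open CategoryTheory

universe u

/-- `Extⁿ_R(M, N) = 0`, using Mathlib's `Ext` functor on `ModuleCat R`. -/
def extVanishes (R : Type u) [CommRing R] (n : ℕ) (M N : Type u) [AddCommGroup M] [Module R M]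
    [AddCommGroup N] [Module R N] : Prop :=
  Subsingleton (((Ext R (ModuleCat.{u} R) n).obj (Opposite.op (ModuleCat.of R M))).obj
    (ModuleCat.of R N))

/-- An `R`-module `M` is strongly Gorenstein projective if there is a short exact sequence
`0 → M → P → M → 0` with `P` projective, and `Ext¹_R(M, Q) = 0` for every projective `Q`. -/
def IsStronglyGorensteinProjective (R : Type u) [CommRing R] (M : Type u) [AddCommGroup M]
    [Module R M] : Prop :=
  (∃ (P : ModuleCat.{u} R) (f : M →ₗ[R] P) (g : P →ₗ[R] M),
      Module.Projective R P ∧ Function.Injective f ∧ Function.Surjective g ∧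
      LinearMap.range f = LinearMap.ker g) ∧
  ∀ Q : ModuleCat.{u} R, Module.Projective R Q → extVanishes R 1 M Q

/-- An `R`-module is Gorenstein projective if it is a direct summand of a strongly Gorenstein
projective module. -/
def IsGorensteinProjective (R : Type u) [CommRing R] (M : Type u) [AddCommGroup M]
    [Module R M] : Prop :=
  ∃ (N : ModuleCat.{u} R) (i : M →ₗ[R] N) (r : N →ₗ[R] M),
    IsStronglyGorensteinProjective R N ∧ r ∘ₗ i = LinearMap.id

/-- An `R`-module `M` is strongly Gorenstein injective if there is a short exact sequence
`0 → M → E → M → 0` with `E` injective, and `Ext¹_R(Q, M) = 0` for every injective `Q`. -/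
def IsStronglyGorensteinInjective (R : Type u) [CommRing R] (M : Type u) [AddCommGroup M]
    [Module R M] : Prop :=
  (∃ (E : ModuleCat.{u} R) (f : M →ₗ[R] E) (g : E →ₗ[R] M),
      Module.Injective R E ∧ Function.Injective f ∧ Function.Surjective g ∧
      LinearMap.range f = LinearMap.ker g) ∧
  ∀ Q : ModuleCat.{u} R, Module.Injective R Q → extVanishes R 1 Q M

/-- An `R`-module is Gorenstein injective if it is a direct summand of a strongly Gorenstein
injective module. -/
def IsGorensteinInjective (R : Type u) [CommRing R] (M : Type u) [AddCommGroup M]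
    [Module R M] : Prop :=
  ∃ (N : ModuleCat.{u} R) (i : M →ₗ[R] N) (r : N →ₗ[R] M),
    IsStronglyGorensteinInjective R N ∧ r ∘ₗ i = LinearMap.id

/-- A ring is G-semisimple if every module over it is Gorenstein projective. -/
def GSemisimple (R : Type u) [CommRing R] : Prop :=
  ∀ M : ModuleCat.{u} R, IsGorensteinProjective R M

/-- A ring is SG-semisimple if every module over it is strongly Gorenstein projective. -/
def SGSemisimple (R : Type u) [CommRing R] : Prop :=
  ∀ M : ModuleCat.{u} R, IsStronglyGorensteinProjective R M

/-! Take a maximal linearly independent subset `s` of `M`. Its span `F` is free, and by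
maximality every element of `M ⧸ F` is killed by a nonzero scalar. As `M ⧸ F` is Gorenstein
projective and `F` is projective, `Ext¹(M ⧸ F, F) = 0`, so `0 → F → M → M ⧸ F → 0` splits
and `M ≃ (s →₀ R) × M ⧸ F`. -/

namespace CategoryTheory

open Limits

section ExtSplitting

variable {R : Type*} [Ring R] {C : Type*} [Category C] [Abelian C] [Linear R C]
  [EnoughProjectives C]

theorem ProjectiveResolution.exists_d_comp_eq_of_subsingleton_ext {X Y : C}
    (P : ProjectiveResolution X) (hXY : Subsingleton (((Ext R C 1).obj (Opposite.op X)).obj Y))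
    (φ : P.complex.X 1 ⟶ Y) (hφ : P.complex.d 2 1 ≫ φ = 0) :
    ∃ ψ : P.complex.X 0 ⟶ Y, P.complex.d 1 0 ≫ ψ = φ := by
  let K := P.complex.linearYonedaObj R Y
  have hK : K.ExactAt 1 := by
    rw [HomologicalComplex.exactAt_iff_isZero_homology]
    exact (ModuleCat.isZero_of_subsingleton _).of_iso (P.isoExt 1 Y).symm
  rw [HomologicalComplex.exactAt_iff' K 0 1 2 (by simp) (by simp),
    ShortComplex.moduleCat_exact_iff] at hK
  exact hK φ hφ

theorem ShortComplex.ShortExact.exists_section_of_subsingleton_ext {S : ShortComplex C}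
    (hS : S.ShortExact) (hext : Subsingleton (((Ext R C 1).obj (Opposite.op S.X₃)).obj S.X₁)) :
    ∃ s : S.X₃ ⟶ S.X₂, s ≫ S.g = 𝟙 S.X₃ := by
  have := hS.mono_f
  have := hS.epi_g
  let P := ProjectiveResolution.of S.X₃
  let ε : P.complex.X 0 ⟶ S.X₃ := P.π.f 0
  have hε : P.complex.d 1 0 ≫ ε = 0 := P.complex_d_comp_π_f_zero
  have : Epi ε := inferInstanceAs (Epi (P.π.f 0))
  have hcoker : IsColimit (CokernelCofork.ofπ ε hε) := P.isColimitCokernelCofork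
  clear_value ε
  -- Lift `ε` to `α`; the part of `d ≫ α` in `X₁` is a 1-cocycle, hence a coboundary `d ≫ ψ`,
  -- and the corrected lift `α - ψ ≫ f` kills `d`, so it descends to the cokernel `X₃`.
  let α := Projective.factorThru ε S.g
  have hα : α ≫ S.g = ε := Projective.factorThru_comp _ _
  let β := hS.exact.lift (P.complex.d 1 0 ≫ α) (by rw [Category.assoc, hα, hε])
  have hβ : β ≫ S.f = P.complex.d 1 0 ≫ α := hS.exact.lift_f _ _
  obtain ⟨ψ, hψ⟩ := P.exists_d_comp_eq_of_subsingleton_ext hext β (by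
    rw [← cancel_mono S.f, Category.assoc, hβ, HomologicalComplex.d_comp_d_assoc, zero_comp,
      zero_comp])
  let γ := α - ψ ≫ S.f
  have hγ : P.complex.d 1 0 ≫ γ = 0 := by
    rw [Preadditive.comp_sub, ← Category.assoc, hψ, hβ, sub_self]
  obtain ⟨s, hs : ε ≫ s = γ⟩ := CokernelCofork.IsColimit.desc' hcoker γ hγ
  refine ⟨s, ?_⟩
  rw [← cancel_epi ε, ← Category.assoc, hs, Preadditive.sub_comp, Category.assoc, S.zero,
    comp_zero, sub_zero, hα, Category.comp_id]

end ExtSplitting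

end CategoryTheory

section Modules

variable {R : Type u} [CommRing R]

theorem extVanishes_of_retract {M N Q : Type u} [AddCommGroup M] [Module R M]
    [AddCommGroup N] [Module R N] [AddCommGroup Q] [Module R Q]
    (i : M →ₗ[R] N) (r : N →ₗ[R] M) (hri : r ∘ₗ i = LinearMap.id)
    (hN : extVanishes R 1 N Q) : extVanishes R 1 M Q := by
  let e : Retract (ModuleCat.of R M) (ModuleCat.of R N) :=
    ⟨ModuleCat.ofHom i, ModuleCat.ofHom r, by rw [← ModuleCat.ofHom_comp, hri]; rfl⟩
  let eExt := e.op.map ((Ext R (ModuleCat.{u} R) 1).flip.obj (ModuleCat.of R Q))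
  have : Subsingleton (((Ext R (ModuleCat.{u} R) 1).flip.obj (ModuleCat.of R Q)).obj
      (Opposite.op (ModuleCat.of R N))) := hN
  exact ((ModuleCat.mono_iff_injective eExt.i).mp inferInstance).subsingleton

theorem IsGorensteinProjective.extVanishes_one {M : Type u} [AddCommGroup M] [Module R M]
    (hM : IsGorensteinProjective R M) (Q : ModuleCat.{u} R) (hQ : Module.Projective R Q) :
    extVanishes R 1 M Q := by
  obtain ⟨N, i, r, hN, hri⟩ := hM
  exact extVanishes_of_retract i r hri (hN.2 Q hQ)

theorem Submodule.exists_mkQ_comp_eq_id_of_extVanishes {M : Type u} [AddCommGroup M]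
    [Module R M] (F : Submodule R M) (hF : extVanishes R 1 (M ⧸ F) F) :
    ∃ s : (M ⧸ F) →ₗ[R] M, F.mkQ ∘ₗ s = LinearMap.id := by
  have hexact := LinearMap.exact_subtype_mkQ F
  let S := ModuleCat.shortComplexOfCompEqZero F.subtype F.mkQ hexact.linearMap_comp_eq_zero
  have hS : S.ShortExact :=
    ModuleCat.shortComplex_shortExact S hexact F.injective_subtype F.mkQ_surjective
  obtain ⟨s, hs⟩ := hS.exists_section_of_subsingleton_ext hF
  exact ⟨s.hom, congrArg ModuleCat.Hom.hom hs⟩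

end Modules

theorem exists_linearIndepOn_id_quotient_span_exists_smul_eq_zero (R M : Type*) [Ring R]
    [Nontrivial R] [AddCommGroup M] [Module R M] :
    ∃ s : Set M, LinearIndepOn R id s ∧
      ∀ x : M ⧸ Submodule.span R s, ∃ r : R, r ≠ 0 ∧ r • x = 0 := by
  obtain ⟨s, hs, hmax⟩ := exists_maximal_linearIndepOn R (id : M → M)
  refine ⟨s, hs, fun x => ?_⟩
  obtain ⟨m, rfl⟩ := Submodule.mkQ_surjective _ x
  simp only [Submodule.mkQ_apply, ← Submodule.Quotient.mk_smul, Submodule.Quotient.mk_eq_zero]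
  by_cases hm : m ∈ s
  · exact ⟨1, one_ne_zero, by simpa using Submodule.subset_span hm⟩
  · simpa using hmax m hm

/-- Over a local G-semisimple commutative ring, every module is isomorphic to `R^(I) ⊕ N` where
every element of `N` has a nonzero annihilator. -/
theorem module_decomposition_of_local_gSemisimple (R : Type u) [CommRing R] [IsLocalRing R]
    (h : GSemisimple R) (M : Type u) [AddCommGroup M] [Module R M] :
    ∃ (ι : Type u) (N : Type u) (_ : AddCommGroup N) (_ : Module R N),
      (∀ x : N, ∃ r : R, r ≠ 0 ∧ r • x = 0) ∧ Nonempty (M ≃ₗ[R] ((ι →₀ R) × N)) := by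
  obtain ⟨s, hs, hquot⟩ := exists_linearIndepOn_id_quotient_span_exists_smul_eq_zero R M
  let F := Submodule.span R s
  let b : Module.Basis s R F :=
    (Module.Basis.span hs.linearIndependent).map (LinearEquiv.ofEq _ _ (by simp [F]))
  have hext : extVanishes R 1 (M ⧸ F) F :=
    (h (.of R (M ⧸ F))).extVanishes_one (.of R F) (Module.Projective.of_basis b)
  obtain ⟨σ, hσ⟩ := F.exists_mkQ_comp_eq_id_of_extVanishes hext
  let e := (LinearMap.exact_subtype_mkQ F).splitSurjectiveEquiv F.injective_subtype ⟨σ, hσ⟩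
  exact ⟨s, M ⧸ F, _, _, hquot, ⟨e.1.trans (b.repr.prodCongr (.refl R _))⟩⟩
end

section
/- Let R be a principal ideal domain and let p be a nonzero prime ideal of R. Then the quotient ring R/p² is a local SG-semisimple ring. -/
open CategoryTheory

universe u

/-!
Write `S = R/p²` and `ε` for the image of a generator `π` of `p`. Then `(ε)` is a maximal
ideal with `ε² = 0`, so `S` is local, and `ann ε = (ε)`, i.e. `S --ε--> S --ε--> S` is exact;
by flatness so is `Q --ε--> Q --ε--> Q` for every projective `Q`. The only ideals of `S` are
`0`, `(ε)` and `S`, so Baer's criterion shows that projective `S`-modules are injective, whence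
`Ext¹(M, Q) = 0`.

For the sequence `0 → M → P → M → 0`: lifting a basis of the `S/(ε)`-vector space `εM`
embeds a free module `F` into `M` with cokernel killed by `ε`. Since `F` is injective,
`M ≅ F ⊕ S/(ε)^(J)`, and the summands have the sequences `0 → F → F ⊕ F → F → 0` and
`0 → S/(ε)^(J) --ε--> S^(J) → S/(ε)^(J) → 0`.
-/

universe v

open Limits in
theorem isZero_Ext_succ_of_injective {R : Type*} [Ring R] {C : Type*} [Category* C]
    [Abelian C] [Linear R C] [EnoughProjectives C] (X Y : C) [Injective Y] (n : ℕ) :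
    IsZero (((Ext R C (n + 1)).obj (Opposite.op X)).obj Y) := by
  let P := ProjectiveResolution.of X
  refine IsZero.of_iso ?_ (P.isoExt (n + 1) Y)
  rw [← HomologicalComplex.exactAt_iff_isZero_homology,
    HomologicalComplex.exactAt_iff' _ n (n + 1) (n + 2) (by simp) (by simp),
    ShortComplex.moduleCat_exact_iff]
  intro (φ : P.complex.X (n + 1) ⟶ Y) hφ
  exact ⟨(P.exact_succ n).descToInjective φ hφ, (P.exact_succ n).comp_descToInjective φ hφ⟩

theorem extVanishes_succ_of_injective {S : Type u} [CommRing S] (n : ℕ) (M Q : Type u)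
    [AddCommGroup M] [Module S M] [AddCommGroup Q] [Module S Q] [Module.Injective S Q] :
    extVanishes S (n + 1) M Q :=
  have := Module.injective_object_of_injective_module S Q
  ModuleCat.subsingleton_of_isZero (isZero_Ext_succ_of_injective _ _ n)

def HasStronglyGorensteinSequence (S : Type u) [CommRing S] (M : Type u) [AddCommGroup M]
    [Module S M] : Prop :=
  ∃ (P : ModuleCat.{u} S) (f : M →ₗ[S] P) (g : P →ₗ[S] M),
    Module.Projective S P ∧ Function.Injective f ∧ Function.Surjective g ∧
      LinearMap.range f = LinearMap.ker g

namespace HasStronglyGorensteinSequence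

variable {S : Type u} [CommRing S] {M N : Type u} [AddCommGroup M] [Module S M]
  [AddCommGroup N] [Module S N]

theorem of_projective [Module.Projective S M] : HasStronglyGorensteinSequence S M :=
  ⟨.of S (M × M), .inl S M M, .snd S M M, inferInstanceAs (Module.Projective S (M × M)),
    LinearMap.inl_injective, LinearMap.snd_surjective,
    Function.Exact.inl_snd.linearMap_ker_eq.symm⟩

theorem of_linearEquiv (e : M ≃ₗ[S] N) (h : HasStronglyGorensteinSequence S N) :
    HasStronglyGorensteinSequence S M := by
  obtain ⟨P, f, g, hP, hf, hg, hfg⟩ := h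
  refine ⟨P, f ∘ₗ e, e.symm ∘ₗ g, hP, hf.comp e.injective,
    e.symm.surjective.comp hg, ?_⟩
  rw [LinearMap.range_comp_of_range_eq_top _ e.range, LinearEquiv.ker_comp, hfg]

theorem prod (hM : HasStronglyGorensteinSequence S M) (hN : HasStronglyGorensteinSequence S N) :
    HasStronglyGorensteinSequence S (M × N) := by
  obtain ⟨P, f, g, hP, hf, hg, hfg⟩ := hM
  obtain ⟨P', f', g', hP', hf', hg', hfg'⟩ := hN
  refine ⟨.of S (P × P'), f.prodMap f', g.prodMap g',
    inferInstanceAs (Module.Projective S (P × P')), hf.prodMap hf', hg.prodMap hg', ?_⟩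
  rw [LinearMap.range_prodMap, LinearMap.ker_prodMap, hfg, hfg']

end HasStronglyGorensteinSequence

section

variable {S : Type u} [CommRing S]

theorem Finsupp.exact_smul_mapRange_mkQ_span_singleton (ε : S) (ι : Type*) :
    Function.Exact (DistribSMul.toLinearMap S (ι →₀ S) ε)
      (Finsupp.mapRange.linearMap (Ideal.span {ε}).mkQ) := by
  intro a
  simp only [Finsupp.ext_iff, Finsupp.mapRange.linearMap_apply, Finsupp.mapRange_apply,
    Submodule.mkQ_apply, Submodule.Quotient.mk_eq_zero, Finsupp.coe_zero, Pi.zero_apply]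
  constructor
  · intro h
    have : a ∈ Finsupp.submodule (fun _ : ι => Ideal.span {ε} • (⊤ : Submodule S S)) := by
      rw [Finsupp.mem_submodule_iff]
      simpa using h
    rw [Finsupp.submodule_smul, Finsupp.submodule_top, Submodule.ideal_span_singleton_smul,
      Submodule.mem_smul_pointwise_iff_exists] at this
    obtain ⟨d, -, hd⟩ := this
    exact ⟨d, hd⟩
  · rintro ⟨d, rfl⟩ i
    exact Ideal.mem_span_singleton'.2 ⟨d i, mul_comm _ _⟩

theorem Module.IsTorsionBySet.exists_linearEquiv_finsupp {I : Ideal S} [I.IsMaximal]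
    {N : Type v} [AddCommGroup N] [Module S N] (hN : Module.IsTorsionBySet S N I) :
    ∃ J : Type v, Nonempty (N ≃ₗ[S] (J →₀ S ⧸ I)) := by
  let _ := hN.module
  let _ := Ideal.Quotient.field I
  exact ⟨_, ⟨(Module.Basis.ofVectorSpace (S ⧸ I) N).repr.restrictScalars S⟩⟩

variable {ε : S}

theorem Module.Flat.exact_smul_of_exact_mulLeft (Q : Type*) [AddCommGroup Q] [Module S Q]
    [Module.Flat S Q] (hε : Function.Exact (LinearMap.mulLeft S ε) (LinearMap.mulLeft S ε)) :
    Function.Exact (DistribSMul.toLinearMap S Q ε) (DistribSMul.toLinearMap S Q ε) := by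
  refine (Function.Exact.iff_of_ladder_linearEquiv (e₁ := TensorProduct.lid S Q)
    (e₂ := TensorProduct.lid S Q) (e₃ := TensorProduct.lid S Q) ?_ ?_).mpr
    (Module.Flat.rTensor_exact Q hε)
  all_goals ext; simp

theorem mul_self_eq_zero_of_exact_mulLeft
    (hε : Function.Exact (LinearMap.mulLeft S ε) (LinearMap.mulLeft S ε)) : ε * ε = 0 := by
  simpa using hε.apply_apply_eq_zero 1

theorem IsLocalRing.of_isMaximal_span_of_mul_self_eq_zero (hsq : ε * ε = 0)
    (hmax : (Ideal.span {ε}).IsMaximal) : IsLocalRing S := by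
  refine .of_unique_max_ideal ⟨_, hmax, fun I hI => (hmax.eq_of_le hI.ne_top ?_).symm⟩
  rw [Ideal.span_singleton_le_iff_mem]
  exact (hI.isPrime.mem_or_mem (hsq ▸ I.zero_mem)).elim id id

theorem Ideal.eq_bot_or_eq_span_or_eq_top (hsq : ε * ε = 0) (hmax : (Ideal.span {ε}).IsMaximal)
    (I : Ideal S) : I = ⊥ ∨ I = Ideal.span {ε} ∨ I = ⊤ := by
  have := IsLocalRing.of_isMaximal_span_of_mul_self_eq_zero hsq hmax
  have hm : IsLocalRing.maximalIdeal S = Ideal.span {ε} :=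
    (IsLocalRing.eq_maximalIdeal hmax).symm
  by_cases htop : I = ⊤
  · exact .inr (.inr htop)
  rcases eq_or_ne I ⊥ with hbot | hbot
  · exact .inl hbot
  obtain ⟨a, haI, ha0⟩ := Submodule.exists_mem_ne_zero_of_ne_bot hbot
  have hle : I ≤ Ideal.span {ε} := hm ▸ IsLocalRing.le_maximalIdeal htop
  obtain ⟨c, rfl⟩ := Ideal.mem_span_singleton'.mp (hle haI)
  have hc : IsUnit c := by
    by_contra hc
    replace hc : c ∈ Ideal.span {ε} := hm ▸ (IsLocalRing.mem_maximalIdeal c).mpr hc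
    obtain ⟨d, rfl⟩ := Ideal.mem_span_singleton'.mp hc
    exact ha0 (by rw [mul_assoc, hsq, mul_zero])
  refine .inr (.inl (le_antisymm hle ?_))
  rw [← Ideal.span_singleton_mul_left_unit hc, Ideal.span_singleton_le_iff_mem]
  exact haI

theorem exists_extension_span_singleton_of_smul_eq {Q : Type*} [AddCommGroup Q] [Module S Q]
    (a : S) (g : Ideal.span {a} →ₗ[S] Q) (y : Q)
    (hy : a • y = g ⟨a, Ideal.mem_span_singleton_self a⟩) :
    ∃ g' : S →ₗ[S] Q, ∀ (x : S) (hx : x ∈ Ideal.span {a}), g' x = g ⟨x, hx⟩ := by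
  refine ⟨LinearMap.toSpanSingleton S Q y, fun x hx => ?_⟩
  obtain ⟨c, rfl⟩ := Ideal.mem_span_singleton'.mp hx
  have : (⟨c * a, hx⟩ : Ideal.span {a}) = c • ⟨a, Ideal.mem_span_singleton_self a⟩ := rfl
  rw [this, map_smul, ← hy, LinearMap.toSpanSingleton_apply, mul_smul]

theorem Module.Projective.injective_of_exact_mulLeft
    (hε : Function.Exact (LinearMap.mulLeft S ε) (LinearMap.mulLeft S ε))
    (hmax : (Ideal.span {ε}).IsMaximal) (Q : Type u) [AddCommGroup Q] [Module S Q]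
    [Module.Projective S Q] : Module.Injective S Q := by
  have hsq := mul_self_eq_zero_of_exact_mulLeft hε
  refine Module.Baer.injective fun I g => ?_
  obtain ⟨a, rfl, ha⟩ : ∃ a, I = Ideal.span {a} ∧ (a = 0 ∨ a = ε ∨ a = 1) := by
    rcases Ideal.eq_bot_or_eq_span_or_eq_top hsq hmax I with rfl | rfl | rfl
    exacts [⟨0, (Ideal.span_singleton_eq_bot.mpr rfl).symm, .inl rfl⟩,
      ⟨ε, rfl, .inr (.inl rfl)⟩, ⟨1, Ideal.span_singleton_one.symm, .inr (.inr rfl)⟩]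
  suffices ∃ y, a • y = g ⟨a, Ideal.mem_span_singleton_self a⟩ by
    obtain ⟨y, hy⟩ := this
    exact exists_extension_span_singleton_of_smul_eq a g y hy
  rcases ha with rfl | rfl | rfl
  · exact ⟨0, by rw [smul_zero, ← map_zero g]; rfl⟩
  · refine (Module.Flat.exact_smul_of_exact_mulLeft Q hε _).mp ?_
    rw [DistribSMul.toLinearMap_apply, ← map_smul]
    convert map_zero g
    exact Subtype.ext hsq
  · exact ⟨_, one_smul S _⟩

theorem exists_injective_finsupp_smul_mem_range
    (hε : Function.Exact (LinearMap.mulLeft S ε) (LinearMap.mulLeft S ε))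
    (hmax : (Ideal.span {ε}).IsMaximal) (M : Type u) [AddCommGroup M] [Module S M] :
    ∃ (I : Type u) (ι : (I →₀ S) →ₗ[S] M), Function.Injective ι ∧
      ∀ x, ε • x ∈ LinearMap.range ι := by
  have hsq := mul_self_eq_zero_of_exact_mulLeft hε
  let εM := LinearMap.range (DistribSMul.toLinearMap S M ε)
  have hεM : Module.IsTorsionBySet S εM (Ideal.span {ε}) :=
    (Module.isTorsionBySet_span_singleton_iff ε).mpr fun ⟨_, x, rfl⟩ =>
      Subtype.ext (by simp [smul_smul, hsq])
  obtain ⟨I, ⟨e⟩⟩ := hεM.exists_linearEquiv_finsupp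
  choose m hm using fun i => (e.symm (Finsupp.single i 1)).2
  let ι := Finsupp.linearCombination S m
  have hι : DistribSMul.toLinearMap S M ε ∘ₗ ι =
      εM.subtype ∘ₗ e.symm.toLinearMap ∘ₗ
        Finsupp.mapRange.linearMap (Ideal.span {ε}).mkQ := by
    ext i
    simpa [ι] using hm i
  have hdiv : ∀ a, ε • ι a = 0 → ∃ d, ε • d = a := fun a ha =>
    (Finsupp.exact_smul_mapRange_mkQ_span_singleton ε I a).mp <| e.symm.injective <|
      Subtype.ext <| (LinearMap.congr_fun hι a).symm.trans ha |>.trans (by simp)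
  refine ⟨I, ι, (injective_iff_map_eq_zero ι).mpr fun a ha => ?_, fun x => ?_⟩
  · obtain ⟨d, rfl⟩ := hdiv a (by rw [ha, smul_zero])
    obtain ⟨d', rfl⟩ := hdiv d (by rw [← map_smul, ha])
    rw [smul_smul, hsq, zero_smul]
  · obtain ⟨a, ha⟩ := Finsupp.mapRange_surjective _ (map_zero _)
      (Submodule.mkQ_surjective (Ideal.span {ε})) (e ⟨ε • x, x, rfl⟩)
    have := LinearMap.congr_fun hι a
    simp only [LinearMap.comp_apply, Finsupp.mapRange.linearMap_apply, ha,
      LinearEquiv.coe_coe, LinearEquiv.symm_apply_apply] at this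
    exact ⟨ε • a, by rw [map_smul]; exact this⟩

theorem exists_linearEquiv_prod_finsupp
    (hε : Function.Exact (LinearMap.mulLeft S ε) (LinearMap.mulLeft S ε))
    (hmax : (Ideal.span {ε}).IsMaximal) (M : Type u) [AddCommGroup M] [Module S M] :
    ∃ I J : Type u, Nonempty (M ≃ₗ[S] (I →₀ S) × (J →₀ S ⧸ Ideal.span {ε})) := by
  obtain ⟨I, ι, hι, hrange⟩ := exists_injective_finsupp_smul_mem_range hε hmax M
  have := Module.Projective.injective_of_exact_mulLeft hε hmax (I →₀ S)
  obtain ⟨l, hl⟩ := Module.Injective.out ι hι LinearMap.id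
  let e := (LinearMap.exact_map_mkQ_range ι).splitInjectiveEquiv
    (Submodule.mkQ_surjective _) ⟨l, LinearMap.ext hl⟩
  have hquot : Module.IsTorsionBySet S (M ⧸ LinearMap.range ι) (Ideal.span {ε}) := by
    refine (Module.isTorsionBySet_span_singleton_iff ε).mpr fun x => ?_
    induction x using Submodule.Quotient.induction_on with | H x => ?_
    rw [← Submodule.Quotient.mk_smul, Submodule.Quotient.mk_eq_zero]
    exact hrange x
  obtain ⟨J, ⟨e'⟩⟩ := hquot.exists_linearEquiv_finsupp
  exact ⟨I, J, ⟨e.1.trans (LinearEquiv.prodCongr (.refl S _) e')⟩⟩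

theorem HasStronglyGorensteinSequence.finsupp_quotient
    (hε : Function.Exact (LinearMap.mulLeft S ε) (LinearMap.mulLeft S ε)) (J : Type u) :
    HasStronglyGorensteinSequence S (J →₀ S ⧸ Ideal.span {ε}) := by
  have hker : LinearMap.ker (LinearMap.mulLeft S ε) = Ideal.span {ε} := by
    ext x
    simp [hε.linearMap_ker_eq, Ideal.mem_span_singleton', mul_comm, eq_comm]
  let μ := (Ideal.span {ε}).liftQ (LinearMap.mulLeft S ε) hker.ge
  have hμ : Function.Injective μ :=
    LinearMap.ker_eq_bot.mp (Submodule.ker_liftQ_eq_bot' _ _ hker.symm)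
  have hmkQ := Finsupp.mapRange_surjective (α := J) _ (map_zero _)
    (Submodule.mkQ_surjective (Ideal.span {ε}))
  refine ⟨.of S (J →₀ S), Finsupp.mapRange.linearMap μ,
    Finsupp.mapRange.linearMap (Submodule.mkQ _),
    inferInstanceAs (Module.Projective S (J →₀ S)),
    Finsupp.mapRange_injective _ (map_zero μ) hμ, hmkQ, ?_⟩
  have hcomp : Finsupp.mapRange.linearMap μ ∘ₗ Finsupp.mapRange.linearMap (Submodule.mkQ _) =
      DistribSMul.toLinearMap S (J →₀ S) ε := by
    ext i : 2
    simp only [LinearMap.comp_apply, Finsupp.mapRange.linearMap_apply, Finsupp.lsingle_apply,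
      Finsupp.mapRange_single, DistribSMul.toLinearMap_apply, Finsupp.smul_single, smul_eq_mul]
    rfl
  rw [(Finsupp.exact_smul_mapRange_mkQ_span_singleton ε J).linearMap_ker_eq, ← hcomp,
    LinearMap.range_comp_of_range_eq_top _ (LinearMap.range_eq_top.mpr hmkQ)]

theorem HasStronglyGorensteinSequence.of_exact_mulLeft
    (hε : Function.Exact (LinearMap.mulLeft S ε) (LinearMap.mulLeft S ε))
    (hmax : (Ideal.span {ε}).IsMaximal) (M : Type u) [AddCommGroup M] [Module S M] :
    HasStronglyGorensteinSequence S M := by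
  obtain ⟨I, J, ⟨e⟩⟩ := exists_linearEquiv_prod_finsupp hε hmax M
  exact .of_linearEquiv e (.prod .of_projective (.finsupp_quotient hε J))

end

section

variable {R : Type u} [CommRing R]

theorem Ideal.Quotient.exact_mulLeft_mk_span_sq [IsDomain R] {π : R} (hπ : π ≠ 0) :
    Function.Exact
      (LinearMap.mulLeft (R ⧸ Ideal.span {π} ^ 2) (Ideal.Quotient.mk (Ideal.span {π} ^ 2) π))
      (LinearMap.mulLeft (R ⧸ Ideal.span {π} ^ 2)
        (Ideal.Quotient.mk (Ideal.span {π} ^ 2) π)) := by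
  have hann : ∀ a : R,
      Ideal.Quotient.mk (Ideal.span {π} ^ 2) π * Ideal.Quotient.mk _ a = 0 ↔ π ∣ a := by
    intro a
    rw [← map_mul, Ideal.Quotient.eq_zero_iff_mem, Ideal.span_singleton_pow,
      Ideal.mem_span_singleton, pow_two, mul_dvd_mul_iff_left hπ]
  intro y
  obtain ⟨a, rfl⟩ := Ideal.Quotient.mk_surjective y
  refine (hann a).trans ⟨fun ⟨c, hc⟩ => ⟨Ideal.Quotient.mk _ c, by simp [hc]⟩, ?_⟩
  rintro ⟨z, hz⟩
  rw [← hann, ← hz, LinearMap.mulLeft_apply, ← mul_assoc, (hann π).mpr dvd_rfl, zero_mul]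

theorem Ideal.Quotient.isMaximal_span_mk_of_pow {π : R} [(Ideal.span {π}).IsMaximal] {n : ℕ}
    (hn : n ≠ 0) : (Ideal.span {Ideal.Quotient.mk (Ideal.span {π} ^ n) π}).IsMaximal := by
  have := Ideal.IsMaximal.map_of_surjective_of_ker_le (m := Ideal.span {π})
    (Ideal.Quotient.mk_surjective (I := Ideal.span {π} ^ n))
    (by rw [Ideal.mk_ker]; exact Ideal.pow_le_self hn)
  rwa [Ideal.map_span, Set.image_singleton] at this

end

/-- For a principal ideal domain `R` and a nonzero prime ideal `p`, the ring `R/p²` is local and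
SG-semisimple. -/
theorem quotient_prime_sq_sgSemisimple (R : Type u) [CommRing R] [IsDomain R]
    [IsPrincipalIdealRing R] (p : Ideal R) (hp : p.IsPrime) (hp0 : p ≠ ⊥) :
    IsLocalRing (R ⧸ p ^ 2) ∧ SGSemisimple (R ⧸ p ^ 2) := by
  have := IsPrime.to_maximal_ideal hp0
  obtain ⟨π, rfl⟩ : ∃ π, p = Ideal.span {π} :=
    ⟨_, (Submodule.IsPrincipal.span_singleton_generator p).symm⟩
  have hε := Ideal.Quotient.exact_mulLeft_mk_span_sq (mt Ideal.span_singleton_eq_bot.mpr hp0)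
  have hmax := Ideal.Quotient.isMaximal_span_mk_of_pow (π := π) two_ne_zero
  refine ⟨.of_isMaximal_span_of_mul_self_eq_zero (mul_self_eq_zero_of_exact_mulLeft hε) hmax,
    fun M => ⟨HasStronglyGorensteinSequence.of_exact_mulLeft hε hmax M, fun Q _ => ?_⟩⟩
  have := Module.Projective.injective_of_exact_mulLeft hε hmax Q
  exact extVanishes_succ_of_injective 0 M Q
end
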